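/- A permutation w ∈ S_n in the image of West's stack-sorting map has at most ⌊(n−1)/2⌋ descents, and this bound is attained (e.g., by s(w) for suitable w, such as the permutation 2143⋯(n−1)(n−2)n when n is odd). -/

import Mathlib

/-- Fuel-based implementation of West's stack-sorting map on lists of naturals:
`s(ε) = ε` and `s(L m R) = s(L) s(R) m` where `m` is the largest entry. -/
def stackSortFuel : ℕ → List ℕ → List ℕ
  | 0, _ => []
  | _, [] => []
  | fuel + 1, l =>
    let m := l.foldr max 0
    let i := l.idxOf m
    stackSortFuel fuel (l.take i) ++ stackSortFuel fuel (l.drop (i + 1)) ++ [m]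

/-- West's stack-sorting map. -/
def stackSort (l : List ℕ) : List ℕ := stackSortFuel l.length l

/-- The set of descents of a list. -/
def listDescents (l : List ℕ) : Set ℕ :=
  {i | ∃ a b, l[i]? = some a ∧ l[i + 1]? = some b ∧ b < a}

/-!
Split `w = L m R` at its maximum `m`, so that `s(w) = s(L) s(R) m`. Appending the maximum creates
no descent, and the junction of `s(L)` and `s(R)` creates at most one, and only when both are
nonempty; hence, by strong induction on the length, `s(w)` has at most `⌊(n - 1)/2⌋` descents.
The bound is attained by `w = (n-1) n (n-3) (n-2) ⋯`: then `s(w) = (n-1) s(w') n`, where `w'` is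
the analogous word of length `n - 2`, and `n - 1` exceeds the first entry of `s(w')`, so every
step adds exactly one descent.
-/

namespace StackSorting

section Descents

variable {α : Type*} [LinearOrder α]

def descentCount : List α → ℕ
  | [] => 0
  | [_] => 0
  | a :: b :: t => (if b < a then 1 else 0) + descentCount (b :: t)

theorem descentCount_cons_cons (a b : α) (t : List α) :
    descentCount (a :: b :: t) = (if b < a then 1 else 0) + descentCount (b :: t) := rfl

theorem descentCount_append_le (A B : List α) :
    descentCount (A ++ B) ≤ descentCount A + descentCount B + 1 := by
  induction A with
  | nil => simp [descentCount]
  | cons a t ih =>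
    cases t with
    | nil =>
      cases B with
      | nil => simp [descentCount]
      | cons b s =>
        simp only [List.singleton_append, descentCount_cons_cons, descentCount]
        split <;> omega
    | cons b t' =>
      simp only [List.cons_append, descentCount_cons_cons] at *
      omega

theorem descentCount_append_singleton_of_forall_le {A : List α} {m : α}
    (h : ∀ x ∈ A, x ≤ m) : descentCount (A ++ [m]) = descentCount A := by
  induction A with
  | nil => rfl
  | cons a t ih =>
    cases t with
    | nil => simp [descentCount_cons_cons, descentCount, h a (by simp)]
    | cons b t' =>
      simp only [List.cons_append, descentCount_cons_cons] at *
      rw [ih fun x hx => h x (List.mem_cons_of_mem a hx)]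

theorem descentCount_cons_of_lt {a b : α} (t : List α) (h : b < a) :
    descentCount (a :: b :: t) = descentCount (b :: t) + 1 := by
  rw [descentCount_cons_cons, if_pos h, add_comm]

/-- `(A.length + B.length) / 2` is the bound `⌊(k - 1)/2⌋` at `k = (A ++ m :: B).length`. -/
theorem descentCount_append_le_half {A B : List α}
    (hA : descentCount A ≤ (A.length - 1) / 2) (hB : descentCount B ≤ (B.length - 1) / 2) :
    descentCount (A ++ B) ≤ (A.length + B.length) / 2 := by
  rcases eq_or_ne A [] with rfl | hA₀
  · simp only [List.nil_append, List.length_nil]; omega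
  rcases eq_or_ne B [] with rfl | hB₀
  · simp only [List.append_nil, List.length_nil]; omega
  have := descentCount_append_le A B
  have := List.length_pos_iff.2 hA₀
  have := List.length_pos_iff.2 hB₀
  omega

end Descents

theorem listDescents_cons_cons (a b : ℕ) (t : List ℕ) :
    listDescents (a :: b :: t) =
      {i | i = 0 ∧ b < a} ∪ (· + 1) '' listDescents (b :: t) := by
  ext (_ | i)
  · simp [listDescents]
  · simp [listDescents]

theorem finite_listDescents (l : List ℕ) : (listDescents l).Finite :=
  (Set.finite_Iio l.length).subset fun _ ⟨_, _, hi, _, _⟩ => (List.getElem?_eq_some_iff.1 hi).1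

theorem ncard_listDescents (l : List ℕ) : (listDescents l).ncard = descentCount l := by
  induction l using descentCount.induct with
  | case1 => simp [listDescents, descentCount]
  | case2 a => simp [listDescents, descentCount]
  | case3 a b t ih =>
    have hfin := (finite_listDescents (b :: t)).image (· + 1)
    have hcard : ((· + 1) '' listDescents (b :: t)).ncard = descentCount (b :: t) := by
      rw [Set.ncard_image_of_injective _ (add_left_injective 1), ih]
    rw [listDescents_cons_cons, descentCount_cons_cons]
    by_cases hba : b < a
    · rw [if_pos hba, show {i | i = 0 ∧ b < a} = {0} by simp [hba], Set.singleton_union,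
        Set.ncard_insert_of_notMem (by simp) hfin, hcard, add_comm]
    · simp [hba, hcard]

theorem exists_eq_append_cons_max {α : Type*} [LinearOrder α] {l : List α} (hl : l ≠ []) :
    ∃ L m R, l = L ++ m :: R ∧ (∀ x ∈ L, x < m) ∧ ∀ x ∈ R, x ≤ m := by
  induction l with
  | nil => exact absurd rfl hl
  | cons a t ih =>
    rcases eq_or_ne t [] with rfl | ht
    · exact ⟨[], a, [], rfl, by simp, by simp⟩
    obtain ⟨L, m, R, rfl, hL, hR⟩ := ih ht
    by_cases ham : a < m
    · refine ⟨a :: L, m, R, rfl, ?_, hR⟩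
      simpa [ham] using hL
    · replace ham := not_lt.1 ham
      refine ⟨[], a, L ++ m :: R, rfl, by simp, ?_⟩
      simp only [List.mem_append, List.mem_cons]
      rintro x (hx | rfl | hx)
      exacts [(hL x hx).le.trans ham, ham, (hR x hx).trans ham]

theorem stackSortFuel_succ_append_cons (f : ℕ) {L R : List ℕ} {m : ℕ}
    (hL : ∀ x ∈ L, x < m) (hR : ∀ x ∈ R, x ≤ m) :
    stackSortFuel (f + 1) (L ++ m :: R) = stackSortFuel f L ++ stackSortFuel f R ++ [m] := by
  have hmax : (L ++ m :: R).foldr max 0 = m := by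
    refine le_antisymm (List.max_le_of_forall_le _ m ?_) (List.le_max_of_le' 0 (by simp) le_rfl)
    simp only [List.mem_append, List.mem_cons]
    rintro x (hx | rfl | hx)
    exacts [(hL x hx).le, le_rfl, hR x hx]
  have hidx : (L ++ m :: R).idxOf m = L.length := by
    rw [List.idxOf_append_of_notMem fun h => lt_irrefl m (hL m h), List.idxOf_cons_self,
      add_zero]
  rw [stackSortFuel.eq_3 _ _ (by simp), hmax, hidx, List.take_left, List.drop_append,
    List.drop_of_length_le (by omega), Nat.add_sub_cancel_left, List.drop_one, List.tail_cons,
    List.nil_append]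

theorem stackSortFuel_eq_of_length_le {f₁ f₂ : ℕ} {l : List ℕ} (h₁ : l.length ≤ f₁)
    (h₂ : l.length ≤ f₂) : stackSortFuel f₁ l = stackSortFuel f₂ l := by
  induction f₁ generalizing f₂ l with
  | zero => rw [List.length_eq_zero_iff.1 (Nat.le_zero.1 h₁)]; cases f₂ <;> rfl
  | succ f ih =>
    rcases eq_or_ne l [] with rfl | hl
    · cases f₂ <;> rfl
    obtain ⟨L, m, R, rfl, hL, hR⟩ := exists_eq_append_cons_max hl
    obtain ⟨g, rfl⟩ : ∃ g, f₂ = g + 1 := Nat.exists_eq_add_one.2 (by simp at h₂; omega)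
    simp only [List.length_append, List.length_cons] at h₁ h₂
    rw [stackSortFuel_succ_append_cons f hL hR, stackSortFuel_succ_append_cons g hL hR,
      ih (f₂ := g) (by omega) (by omega), ih (l := R) (f₂ := g) (by omega) (by omega)]

/-- `hL` is strict because the definition splits at the first occurrence (`idxOf`) of the
maximum. -/
theorem stackSort_append_cons {L R : List ℕ} {m : ℕ} (hL : ∀ x ∈ L, x < m)
    (hR : ∀ x ∈ R, x ≤ m) : stackSort (L ++ m :: R) = stackSort L ++ stackSort R ++ [m] := by
  rw [stackSort, List.length_append, List.length_cons, ← add_assoc,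
    stackSortFuel_succ_append_cons _ hL hR, stackSort, stackSort,
    stackSortFuel_eq_of_length_le (f₂ := L.length) (by omega) le_rfl,
    stackSortFuel_eq_of_length_le (f₂ := R.length) (by omega) le_rfl]

theorem stackSort_singleton (a : ℕ) : stackSort [a] = [a] :=
  stackSort_append_cons (L := []) (R := []) (by simp) (by simp)

theorem stackSort_perm (l : List ℕ) : (stackSort l).Perm l := by
  rcases eq_or_ne l [] with rfl | hl
  · rfl
  obtain ⟨L, m, R, rfl, hL, hR⟩ := exists_eq_append_cons_max hl
  rw [stackSort_append_cons hL hR, List.append_assoc]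
  exact (stackSort_perm L).append
    ((List.perm_append_singleton m _).trans ((stackSort_perm R).cons m))
termination_by l.length
decreasing_by all_goals subst_vars; simp only [List.length_append, List.length_cons]; omega

theorem descentCount_stackSort_le (l : List ℕ) :
    descentCount (stackSort l) ≤ (l.length - 1) / 2 := by
  rcases eq_or_ne l [] with rfl | hl
  · rfl
  obtain ⟨L, m, R, rfl, hL, hR⟩ := exists_eq_append_cons_max hl
  have hpL := stackSort_perm L
  have hpR := stackSort_perm R
  have hle : ∀ x ∈ stackSort L ++ stackSort R, x ≤ m := by
    simp only [List.mem_append, hpL.mem_iff, hpR.mem_iff]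
    rintro x (hx | hx)
    exacts [(hL x hx).le, hR x hx]
  have := descentCount_append_le_half
    (hpL.length_eq ▸ descentCount_stackSort_le L) (hpR.length_eq ▸ descentCount_stackSort_le R)
  rw [stackSort_append_cons hL hR, descentCount_append_singleton_of_forall_le hle]
  simpa [hpL.length_eq, hpR.length_eq] using this
termination_by l.length
decreasing_by all_goals subst_vars; simp only [List.length_append, List.length_cons]; omega

/-- `extremalPerm 5 = [4, 5, 2, 3, 1]`, with stack-sorted image `[4, 2, 1, 3, 5]`. -/
def extremalPerm : ℕ → List ℕ
  | 0 => []
  | 1 => [1]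
  | n + 2 => (n + 1) :: (n + 2) :: extremalPerm n

theorem extremalPerm_perm (n : ℕ) : (extremalPerm n).Perm (List.range' 1 n) := by
  induction n using extremalPerm.induct with
  | case1 | case2 => rfl
  | case3 n ih =>
    have hrange : List.range' 1 (n + 2) = List.range' 1 n ++ [n + 1, n + 2] := by
      rw [← List.range'_append]; simp [List.range'_succ]; omega
    rw [hrange]
    exact ((ih.cons (n + 2)).cons (n + 1)).trans (List.perm_append_comm (l₁ := [_, _]))

theorem le_of_mem_stackSort_extremalPerm {n x : ℕ} (hx : x ∈ stackSort (extremalPerm n)) :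
    x ≤ n := by
  have := List.mem_range'_1.1 ((stackSort_perm _).trans (extremalPerm_perm n) |>.mem_iff.1 hx)
  omega

theorem stackSort_extremalPerm_add_two (n : ℕ) :
    stackSort (extremalPerm (n + 2)) = (n + 1) :: stackSort (extremalPerm n) ++ [n + 2] := by
  have hR : ∀ x ∈ extremalPerm n, x ≤ n + 2 := fun x hx => by
    have := List.mem_range'_1.1 ((extremalPerm_perm n).mem_iff.1 hx)
    omega
  rw [extremalPerm, ← List.singleton_append, stackSort_append_cons (by simp) hR,
    stackSort_singleton, List.singleton_append]

theorem descentCount_stackSort_extremalPerm (n : ℕ) :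
    descentCount (stackSort (extremalPerm n)) = (n - 1) / 2 := by
  induction n using extremalPerm.induct with
  | case1 | case2 => rfl
  | case3 n ih =>
    rw [stackSort_extremalPerm_add_two, descentCount_append_singleton_of_forall_le]
    · have hlen : (stackSort (extremalPerm n)).length = n := by
        rw [(stackSort_perm _).length_eq, (extremalPerm_perm n).length_eq, List.length_range']
      rcases hS : stackSort (extremalPerm n) with _ | ⟨a, t⟩
      · rw [hS, List.length_nil] at hlen
        subst hlen
        rfl
      · have ha : a ≤ n := le_of_mem_stackSort_extremalPerm (by simp [hS])
        rw [hS] at ih hlen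
        rw [descentCount_cons_of_lt t (by omega), ih]
        simp only [List.length_cons] at hlen
        omega
    · intro x hx
      rcases List.mem_cons.1 hx with rfl | hx
      · omega
      · have := le_of_mem_stackSort_extremalPerm hx
        omega

end StackSorting

open StackSorting

theorem stmt_12_general (n : ℕ) :
    (∀ w : List ℕ, w.Perm (List.range' 1 n) →
      Set.ncard (listDescents (stackSort w)) ≤ (n - 1) / 2) ∧
    (∃ w : List ℕ, w.Perm (List.range' 1 n) ∧
      Set.ncard (listDescents (stackSort w)) = (n - 1) / 2) := by
  refine ⟨fun w hw => ?_, extremalPerm n, extremalPerm_perm n, ?_⟩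
  · simpa [ncard_listDescents, hw.length_eq] using descentCount_stackSort_le w
  · rw [ncard_listDescents, descentCount_stackSort_extremalPerm]

/-- A permutation of `{1, …, n}` in the image of West's stack-sorting map has
at most `⌊(n-1)/2⌋` descents, and the bound is attained. -/
theorem stmt_12 (n : ℕ) (hn : 1 ≤ n) :
    (∀ w : List ℕ, w.Perm (List.range' 1 n) →
      Set.ncard (listDescents (stackSort w)) ≤ (n - 1) / 2) ∧
    (∃ w : List ℕ, w.Perm (List.range' 1 n) ∧
      Set.ncard (listDescents (stackSort w)) = (n - 1) / 2) :=
  stmt_12_general n
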